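/- Let α ∈ (0,1) and let λ be a nonzero complex number with arg(λ) ∈ (-πα, πα). Then ∫₀^∞ v^{α-1} / (v^{2α} - 2λ v^α cos(απ) + λ²) dv = π(1-α) / (α λ sin(απ)). -/

import Mathlib

/-!
The substitution `t = v ^ α` turns the integral into `α⁻¹ ∫₀^∞ dt / ((t + a) (t + b))`, where
`a = λ e^{i(απ - π)}` and `b = λ e^{i(π - απ)}` are the negatives of the roots of
`t² - 2λt cos(απ) + λ²`. The bound on `arg λ` puts `a` and `b` in the slit plane, with
`log a - log b = 2i(απ - π)`, so `(log (t + a) - log (t + b)) / (b - a)` is an antiderivative on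
`[0, ∞)` that tends to `0` at infinity. Finally `a - b = -2iλ sin(απ)`.
-/

open Real Set Filter MeasureTheory
open Topology
open Complex (I slitPlane)

lemma Complex.ofReal_add_mem_slitPlane {a : ℂ} (ha : a ∈ slitPlane) {t : ℝ} (ht : 0 ≤ t) :
    (t : ℂ) + a ∈ slitPlane := by
  rw [Complex.mem_slitPlane_iff] at ha ⊢
  simp only [Complex.add_re, Complex.ofReal_re, Complex.add_im, Complex.ofReal_im, zero_add]
  exact ha.imp (fun h => by linarith) id

lemma Complex.log_mul_exp_mul_I {z : ℂ} (hz : z ≠ 0) {φ : ℝ}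
    (h : z.arg + φ ∈ Ioc (-π) π) :
    Complex.log (z * Complex.exp (φ * I)) = Complex.log z + φ * I := by
  have him : (Complex.log z + φ * I).im = z.arg + φ := by simp [Complex.log_im]
  conv_lhs => rw [← Complex.exp_log hz, ← Complex.exp_add]
  exact Complex.log_exp (him ▸ h.1) (him ▸ h.2)

lemma Complex.mul_exp_mul_I_mem_slitPlane {z : ℂ} (hz : z ≠ 0) {φ : ℝ}
    (h : z.arg + φ ∈ Ioo (-π) π) : z * Complex.exp (φ * I) ∈ slitPlane := by
  rw [Complex.mem_slitPlane_iff_arg, ← Complex.log_im,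
    Complex.log_mul_exp_mul_I hz (Ioo_subset_Ioc_self h)]
  simpa [Complex.log_im, hz] using h.2.ne

lemma hasDerivAt_log_ofReal_add_sub_log_ofReal_add {a b : ℂ} (hab : a ≠ b) {t : ℝ}
    (ha : (t : ℂ) + a ∈ slitPlane) (hb : (t : ℂ) + b ∈ slitPlane) :
    HasDerivAt (fun s : ℝ => (Complex.log (s + a) - Complex.log (s + b)) / (b - a))
      (((t : ℂ) + a) * (t + b))⁻¹ t := by
  have hderiv (c : ℂ) (hc : (t : ℂ) + c ∈ slitPlane) :
      HasDerivAt (fun s : ℝ => Complex.log (s + c)) ((t : ℂ) + c)⁻¹ t := by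
    simpa using ((Complex.ofRealCLM.hasDerivAt (x := t)).add_const c).clog_real hc
  refine (((hderiv a ha).sub (hderiv b hb)).div_const (b - a)).congr_deriv ?_
  have := Complex.slitPlane_ne_zero ha
  have := Complex.slitPlane_ne_zero hb
  have := sub_ne_zero.2 hab.symm
  field_simp
  ring

lemma tendsto_log_ofReal_add_sub_log_atTop (a : ℂ) :
    Tendsto (fun t : ℝ => Complex.log (t + a) - Real.log t) atTop (𝓝 0) := by
  have hlim : Tendsto (fun t : ℝ => 1 + a * (t : ℂ)⁻¹) atTop (𝓝 1) := by
    simpa using ((Complex.continuous_ofReal.tendsto 0).comp tendsto_inv_atTop_zero).const_mul a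
      |>.const_add 1
  have hlog := (continuousAt_clog Complex.one_mem_slitPlane).tendsto.comp hlim
  rw [Complex.log_one] at hlog
  refine hlog.congr' ?_
  filter_upwards [eventually_gt_atTop 0,
    hlim.eventually (Complex.isOpen_slitPlane.mem_nhds Complex.one_mem_slitPlane)] with t ht hs
  have ht' : (t : ℂ) ≠ 0 := by exact_mod_cast ht.ne'
  rw [Function.comp_apply, show (t : ℂ) + a = t * (1 + a * (t : ℂ)⁻¹) by field_simp,
    Complex.log_ofReal_mul ht (Complex.slitPlane_ne_zero hs)]
  ring

lemma isBigO_inv_ofReal_add_mul_ofReal_add (a b : ℂ) :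
    (fun t : ℝ => (((t : ℂ) + a) * (t + b))⁻¹) =O[atTop] fun t => t ^ (-2 : ℝ) := by
  have hnorm (c : ℂ) (t : ℝ) (ht : 2 * ‖c‖ ≤ t) : t / 2 ≤ ‖(t : ℂ) + c‖ := by
    have := norm_sub_le_norm_add (t : ℂ) c
    rw [Complex.norm_real, Real.norm_of_nonneg (by linarith [norm_nonneg c])] at this
    linarith
  refine Asymptotics.IsBigO.of_bound 4 ?_
  filter_upwards [eventually_ge_atTop (2 * ‖a‖), eventually_ge_atTop (2 * ‖b‖),
    eventually_gt_atTop 0] with t hta htb ht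
  rw [norm_inv, norm_mul, Real.norm_of_nonneg (by positivity), Real.rpow_neg ht.le,
    Real.rpow_two, ← div_eq_mul_inv, inv_le_comm₀ (by nlinarith [hnorm a t hta, hnorm b t htb])
      (by positivity), inv_div]
  nlinarith [hnorm a t hta, hnorm b t htb]

lemma integrableOn_Ioi_inv_ofReal_add_mul_ofReal_add {a b : ℂ} (ha : a ∈ slitPlane)
    (hb : b ∈ slitPlane) :
    IntegrableOn (fun t : ℝ => (((t : ℂ) + a) * (t + b))⁻¹) (Ioi 0) := by
  have hcont : ContinuousOn (fun t : ℝ => (((t : ℂ) + a) * (t + b))⁻¹) (Ici 0) := by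
    refine ContinuousOn.inv₀ (by fun_prop) fun t ht => mul_ne_zero ?_ ?_
    · exact Complex.slitPlane_ne_zero (Complex.ofReal_add_mem_slitPlane ha ht)
    · exact Complex.slitPlane_ne_zero (Complex.ofReal_add_mem_slitPlane hb ht)
  refine IntegrableOn.mono_set ?_ Ioi_subset_Ici_self
  exact (hcont.locallyIntegrableOn measurableSet_Ici).integrableOn_of_isBigO_atTop
    (isBigO_inv_ofReal_add_mul_ofReal_add a b)
    (integrableAtFilter_rpow_atTop_iff.2 (by norm_num))

theorem integral_Ioi_inv_ofReal_add_mul_ofReal_add {a b : ℂ} (ha : a ∈ slitPlane)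
    (hb : b ∈ slitPlane) (hab : a ≠ b) :
    ∫ t in Ioi (0 : ℝ), (((t : ℂ) + a) * (t + b))⁻¹ =
      (Complex.log a - Complex.log b) / (a - b) := by
  have hlim : Tendsto (fun t : ℝ => (Complex.log (t + a) - Complex.log (t + b)) / (b - a))
      atTop (𝓝 0) := by
    simpa using ((tendsto_log_ofReal_add_sub_log_atTop a).sub
      (tendsto_log_ofReal_add_sub_log_atTop b)).div_const (b - a)
  have hderiv (t : ℝ) (ht : t ∈ Ici 0) := hasDerivAt_log_ofReal_add_sub_log_ofReal_add hab
    (Complex.ofReal_add_mem_slitPlane ha ht) (Complex.ofReal_add_mem_slitPlane hb ht)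
  rw [integral_Ioi_of_hasDerivAt_of_tendsto' hderiv
    (integrableOn_Ioi_inv_ofReal_add_mul_ofReal_add ha hb) hlim, ← neg_sub b a, div_neg]
  simp

theorem integral_Ioi_rpow_sub_one_smul_comp_rpow {E : Type*} [NormedAddCommGroup E]
    [NormedSpace ℝ E] (g : ℝ → E) {p : ℝ} (hp : p ≠ 0) :
    ∫ x in Ioi (0 : ℝ), x ^ (p - 1) • g (x ^ p) = |p|⁻¹ • ∫ y in Ioi (0 : ℝ), g y := by
  rw [← integral_comp_rpow_Ioi g hp, ← integral_smul]
  congr 1 with x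
  rw [mul_smul, smul_smul, inv_mul_cancel₀ (abs_ne_zero.2 hp), one_smul]

lemma sq_sub_two_mul_mul_cos_add_sq (z l : ℂ) (θ : ℝ) :
    z ^ 2 - 2 * l * z * Real.cos θ + l ^ 2 =
      (z + l * Complex.exp ((θ - π : ℝ) * I)) *
        (z + l * Complex.exp ((π - θ : ℝ) * I)) := by
  simp only [Complex.exp_mul_I, ← Complex.ofReal_cos, ← Complex.ofReal_sin, Real.cos_sub_pi,
    Real.sin_sub_pi, Real.cos_pi_sub, Real.sin_pi_sub]
  push_cast
  linear_combination
    l ^ 2 * Complex.sin (θ : ℂ) ^ 2 * Complex.I_sq - l ^ 2 * Complex.sin_sq_add_cos_sq (θ : ℂ)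

lemma mul_exp_sub_pi_sub_mul_exp_pi_sub (l : ℂ) (θ : ℝ) :
    l * Complex.exp ((θ - π : ℝ) * I) - l * Complex.exp ((π - θ : ℝ) * I) =
      -2 * I * l * Real.sin θ := by
  simp only [Complex.exp_mul_I, ← Complex.ofReal_cos, ← Complex.ofReal_sin, Real.cos_sub_pi,
    Real.sin_sub_pi, Real.cos_pi_sub, Real.sin_pi_sub]
  push_cast
  ring

theorem stmt_9 (α : ℝ) (hα : α ∈ Set.Ioo (0 : ℝ) 1)
    (lam : ℂ) (hlam : lam ≠ 0) (harg : lam.arg ∈ Set.Ioo (-(π * α)) (π * α)) :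
    (∫ v in Set.Ioi (0 : ℝ),
        ((v ^ (α - 1) : ℝ) : ℂ) /
          (((v ^ (2 * α) : ℝ) : ℂ) - 2 * lam * ((v ^ α : ℝ) : ℂ) * (Real.cos (α * π) : ℝ) +
            lam ^ 2)) =
      ((π * (1 - α) : ℝ) : ℂ) / ((α : ℂ) * lam * (Real.sin (α * π) : ℝ)) := by
  obtain ⟨hα0, hα1⟩ := hα
  set θ := α * π with hθ
  have hθπ : θ < π := by nlinarith [pi_pos]
  have hsin : (Real.sin θ : ℂ) ≠ 0 :=
    Complex.ofReal_ne_zero.2 (Real.sin_pos_of_pos_of_lt_pi (by positivity) hθπ).ne'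
  have hα0' : (α : ℂ) ≠ 0 := Complex.ofReal_ne_zero.2 hα0.ne'
  rw [mul_comm π α, ← hθ] at harg
  have ha : lam.arg + (θ - π) ∈ Ioo (-π) π := ⟨by linarith [harg.1], by linarith [harg.2]⟩
  have hb : lam.arg + (π - θ) ∈ Ioo (-π) π := ⟨by linarith [harg.1], by linarith [harg.2]⟩
  set a := lam * Complex.exp ((θ - π : ℝ) * I)
  set b := lam * Complex.exp ((π - θ : ℝ) * I)
  have hab : a - b = -2 * I * lam * Real.sin θ := mul_exp_sub_pi_sub_mul_exp_pi_sub lam θ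
  have hab' : a ≠ b := sub_ne_zero.1 (hab ▸ mul_ne_zero (mul_ne_zero (by simp) hlam) hsin)
  set g : ℝ → ℂ := fun t => (((t : ℂ) + a) * (t + b))⁻¹
  calc _ = ∫ v in Ioi (0 : ℝ), v ^ (α - 1) • g (v ^ α) := by
        refine setIntegral_congr_fun measurableSet_Ioi fun v hv => ?_
        rw [mul_comm 2 α, Real.rpow_mul (le_of_lt hv), Real.rpow_two, Complex.ofReal_pow,
          sq_sub_two_mul_mul_cos_add_sq, Complex.real_smul, div_eq_mul_inv]
    _ = (α : ℂ)⁻¹ * ((Complex.log a - Complex.log b) / (a - b)) := by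
        rw [integral_Ioi_rpow_sub_one_smul_comp_rpow g hα0.ne', abs_of_pos hα0,
          integral_Ioi_inv_ofReal_add_mul_ofReal_add (Complex.mul_exp_mul_I_mem_slitPlane hlam ha)
            (Complex.mul_exp_mul_I_mem_slitPlane hlam hb) hab', Complex.real_smul,
          Complex.ofReal_inv]
    _ = _ := by
        rw [Complex.log_mul_exp_mul_I hlam (Ioo_subset_Ioc_self ha),
          Complex.log_mul_exp_mul_I hlam (Ioo_subset_Ioc_self hb), hab]
        field_simp
        push_cast [hθ]
        ring
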